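/- arXiv:2504.02631 — 2 statements merged into one kernel-verified Lean document; each statement's English description precedes it below -/
import Mathlib

section
/- Let A ∈ ℝ^{p×p}, c ∈ ℝ^p, μ > 0, r ≥ 0, and let η > 0 be such that η I_p − μ AᵀA is positive definite. Given (β^t, z^t, u^t) with z^t ∈ Z_r, define β^{t+1} = S_{1/η}(β^t + Aᵀu^t/η), z^{t+1} = clip_r(z^t − u^t/μ), and u^{t+1} = u^t − (μ/2)[2(Aβ^{t+1} − z^{t+1} − c) − (Aβ^t − z^t − c)]. Then z^{t+1} ∈ Z_r and for every g = (β, z, u) with z ∈ Z_r: ‖β‖₁ − ‖β^{t+1}‖₁ + ⟨g − g^{t+1}, F(g^{t+1})⟩ ≥ ⟨g − g^{t+1}, H(g^t − g^{t+1})⟩, where H = [[η I_p, 0, Aᵀ], [0, μI_p, −I_p], [A, −I_p, (2/μ)I_p]]. -/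
open Matrix Filter

noncomputable section

/-- Vectors in ℝ^p. -/
abbrev Vec (p : ℕ) := Fin p → ℝ

/-- Triples `g = (β, z, u) ∈ ℝ^p × ℝ^p × ℝ^p`. -/
abbrev Trip (p : ℕ) := Vec p × Vec p × Vec p

/-- Index type for ℝ^{3p}. -/
abbrev Idx3 (p : ℕ) := Fin p ⊕ Fin p ⊕ Fin p

/-- Identify a triple `(β, z, u)` with a vector in ℝ^{3p}. -/
def toSum {p : ℕ} (g : Trip p) : Idx3 p → ℝ := Sum.elim g.1 (Sum.elim g.2.1 g.2.2)

/-- The operator `F(β, z, u) = (−Aᵀu, u, Aβ − z − c)`. -/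
def Fop {p : ℕ} (A : Matrix (Fin p) (Fin p) ℝ) (c : Vec p) (g : Trip p) : Trip p :=
  (-(Aᵀ *ᵥ g.2.2), g.2.2, A *ᵥ g.1 - g.2.1 - c)

/-- Membership in the box `Z_r = {z : ‖z‖_∞ ≤ r}`. -/
def inZ {p : ℕ} (r : ℝ) (z : Vec p) : Prop := ∀ j, |z j| ≤ r

/-- The ℓ₁ norm on ℝ^p. -/
def l1 {p : ℕ} (β : Vec p) : ℝ := ∑ j, |β j|

/-- The Euclidean inner product on ℝ^{3p}. -/
def ip {p : ℕ} (v w : Trip p) : ℝ := toSum v ⬝ᵥ toSum w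

/-- The bilinear form `⟨v, H w⟩` on ℝ^{3p}; in particular `ipH H v v = ‖v‖_H²`. -/
def ipH {p : ℕ} (H : Matrix (Idx3 p) (Idx3 p) ℝ) (v w : Trip p) : ℝ :=
  toSum v ⬝ᵥ (H *ᵥ toSum w)

/-- `g* = (β*, z*, u*)` is a saddle point: `z* ∈ Z_r` and
`‖β‖₁ − ‖β*‖₁ + ⟨g − g*, F(g*)⟩ ≥ 0` for all `g = (β, z, u)` with `z ∈ Z_r`. -/
def IsSaddle {p : ℕ} (A : Matrix (Fin p) (Fin p) ℝ) (c : Vec p) (r : ℝ)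
    (gs : Trip p) : Prop :=
  inZ r gs.2.1 ∧ ∀ g : Trip p, inZ r g.2.1 →
    0 ≤ l1 g.1 - l1 gs.1 + ip (g - gs) (Fop A c gs)

/-- The sequence `g^t` satisfies the PPA variational inequality with matrix `H`:
for every `t` and every `g = (β, z, u)` with `z ∈ Z_r`,
`‖β‖₁ − ‖β^{t+1}‖₁ + ⟨g − g^{t+1}, F(g^{t+1})⟩ ≥ ⟨g − g^{t+1}, H(g^t − g^{t+1})⟩`. -/
def SatisfiesPVI {p : ℕ} (A : Matrix (Fin p) (Fin p) ℝ) (c : Vec p) (r : ℝ)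
    (H : Matrix (Idx3 p) (Idx3 p) ℝ) (g : ℕ → Trip p) : Prop :=
  ∀ t : ℕ, ∀ gg : Trip p, inZ r gg.2.1 →
    ipH H (gg - g (t + 1)) (g t - g (t + 1)) ≤
      l1 gg.1 - l1 (g (t + 1)).1 + ip (gg - g (t + 1)) (Fop A c (g (t + 1)))

/-- Soft-thresholding at level `κ`: `S_κ(x) = sign(x) · max(|x| − κ, 0)`. -/
def soft (κ x : ℝ) : ℝ := Real.sign x * max (|x| - κ) 0

/-- Clipping to `[−r, r]`: `clip_r(x) = min(max(x, −r), r)`. -/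
def clip (r x : ℝ) : ℝ := min (max x (-r)) r

/-!
The `β`-update is the proximal map of `‖·‖₁ / η` and the `z`-update is the Euclidean projection
onto the box `Z_r`; their variational characterisations
`η ⟨w - βⁿ, β - βⁿ⟩ + ‖βⁿ‖₁ ≤ ‖β‖₁` and `⟨v - zⁿ, z - zⁿ⟩ ≤ 0` give the inequality once one
observes that `H (gᵗ - gⁿ) - F(gⁿ) = (η (w - βⁿ), μ (v - zⁿ), 0)`, where `w` and `v` are the points
being thresholded and clipped: the `u`-update is chosen exactly so that the last block vanishes.
-/

lemma soft_of_lt {κ w : ℝ} (hκ : 0 ≤ κ) (hw : κ < w) : soft κ w = w - κ := by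
  have hw₀ : 0 < w := hκ.trans_lt hw
  rw [soft, Real.sign_of_pos hw₀, abs_of_pos hw₀, max_eq_left (by linarith), one_mul]

lemma soft_of_lt_neg {κ w : ℝ} (hκ : 0 ≤ κ) (hw : w < -κ) : soft κ w = w + κ := by
  have hw₀ : w < 0 := by linarith
  rw [soft, Real.sign_of_neg hw₀, abs_of_neg hw₀, max_eq_left (by linarith)]
  ring

lemma soft_of_abs_le {κ w : ℝ} (hw : |w| ≤ κ) : soft κ w = 0 := by
  rw [soft, max_eq_right (by linarith), mul_zero]

theorem sub_soft_mul_sub_soft_add_le {κ : ℝ} (hκ : 0 ≤ κ) (w b : ℝ) :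
    (w - soft κ w) * (b - soft κ w) + κ * |soft κ w| ≤ κ * |b| := by
  rcases lt_or_ge κ w with hw | hw
  · rw [soft_of_lt hκ hw, abs_of_nonneg (by linarith)]
    calc _ = κ * b := by ring
      _ ≤ κ * |b| := mul_le_mul_of_nonneg_left (le_abs_self b) hκ
  rcases lt_or_ge w (-κ) with hw' | hw'
  · rw [soft_of_lt_neg hκ hw', abs_of_nonpos (by linarith)]
    calc _ = κ * -b := by ring
      _ ≤ κ * |b| := mul_le_mul_of_nonneg_left (neg_le_abs b) hκ
  · have hwκ : |w| ≤ κ := abs_le.2 ⟨hw', hw⟩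
    rw [soft_of_abs_le hwκ]
    calc _ = w * b := by simp
      _ ≤ |w| * |b| := by rw [← abs_mul]; exact le_abs_self _
      _ ≤ κ * |b| := mul_le_mul_of_nonneg_right hwκ (abs_nonneg b)

theorem abs_clip_le {r : ℝ} (hr : 0 ≤ r) (v : ℝ) : |clip r v| ≤ r :=
  abs_le.2 ⟨le_min (le_max_right _ _) (by linarith), min_le_right _ _⟩

theorem sub_clip_mul_sub_clip_nonpos {r b : ℝ} (hb : |b| ≤ r) (v : ℝ) :
    (v - clip r v) * (b - clip r v) ≤ 0 := by
  obtain ⟨hb₁, hb₂⟩ := abs_le.1 hb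
  rcases le_total v (-r) with hv | hv
  · rw [clip, max_eq_right hv, min_eq_left (by linarith)]
    exact mul_nonpos_of_nonpos_of_nonneg (by linarith) (by linarith)
  rcases le_total v r with hv' | hv'
  · rw [clip, max_eq_left hv, min_eq_left hv', sub_self, zero_mul]
  · rw [clip, max_eq_left hv, min_eq_right hv']
    exact mul_nonpos_of_nonneg_of_nonpos (by linarith) (by linarith)

section Vectors

variable {p : ℕ}

theorem sub_soft_dotProduct_add_l1_le {κ : ℝ} (hκ : 0 ≤ κ) (w b : Vec p) :
    (w - fun j => soft κ (w j)) ⬝ᵥ (b - fun j => soft κ (w j)) +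
      κ * l1 (fun j => soft κ (w j)) ≤ κ * l1 b := by
  simp only [dotProduct, l1, Finset.mul_sum, ← Finset.sum_add_distrib]
  exact Finset.sum_le_sum fun j _ => sub_soft_mul_sub_soft_add_le hκ (w j) (b j)

theorem sub_clip_dotProduct_sub_clip_nonpos {r : ℝ} {b : Vec p} (hb : inZ r b) (v : Vec p) :
    (v - fun j => clip r (v j)) ⬝ᵥ (b - fun j => clip r (v j)) ≤ 0 :=
  Finset.sum_nonpos fun j _ => sub_clip_mul_sub_clip_nonpos (hb j) (v j)

lemma toSum_sub (g h : Trip p) : toSum (g - h) = toSum g - toSum h := by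
  ext (i | i | i) <;> rfl

lemma ip_mk (β z u β' z' u' : Vec p) :
    ip (β, z, u) (β', z', u') = β ⬝ᵥ β' + z ⬝ᵥ z' + u ⬝ᵥ u' := by
  simp [ip, toSum, dotProduct, Fintype.sum_sum_type, add_assoc]

lemma ip_sub_right (v w w' : Trip p) : ip v (w - w') = ip v w - ip v w' := by
  rw [ip, ip, ip, toSum_sub, dotProduct_sub]

end Vectors

section Step

variable {p : ℕ} (A : Matrix (Fin p) (Fin p) ℝ) (c : Vec p) (μ η r : ℝ)

/-- The matrix `H = [[ηI, 0, Aᵀ], [0, μI, −I], [A, −I, (2/μ)I]]`. -/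
def ppaH : Matrix (Idx3 p) (Idx3 p) ℝ :=
  fromBlocks (η • (1 : Matrix (Fin p) (Fin p) ℝ))
    (fromCols (0 : Matrix (Fin p) (Fin p) ℝ) Aᵀ)
    (fromRows (0 : Matrix (Fin p) (Fin p) ℝ) A)
    (fromBlocks (μ • (1 : Matrix (Fin p) (Fin p) ℝ))
      (-(1 : Matrix (Fin p) (Fin p) ℝ)) (-(1 : Matrix (Fin p) (Fin p) ℝ))
      ((2 / μ) • (1 : Matrix (Fin p) (Fin p) ℝ)))

lemma ppaH_mulVec_toSum (β z u : Vec p) :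
    ppaH A μ η *ᵥ toSum (β, z, u) =
      toSum (η • β + Aᵀ *ᵥ u, μ • z - u, A *ᵥ β - z + (2 / μ) • u) := by
  ext (i | i | i) <;>
    simp [ppaH, toSum, fromBlocks_mulVec, fromRows_mulVec, smul_mulVec, neg_mulVec,
      sub_eq_add_neg, add_assoc]

lemma ipH_ppaH (v : Trip p) (β z u : Vec p) :
    ipH (ppaH A μ η) v (β, z, u) =
      ip v (η • β + Aᵀ *ᵥ u, μ • z - u, A *ᵥ β - z + (2 / μ) • u) := by
  rw [ipH, ppaH_mulVec_toSum, ip]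

lemma ppaH_sub_Fop {βt zt ut βn zn un : Vec p} (hμ : μ ≠ 0) (hη : η ≠ 0)
    (hun : un = ut - (μ / 2) • ((2 : ℝ) • (A *ᵥ βn - zn - c) - (A *ᵥ βt - zt - c))) :
    (η • (βt - βn) + Aᵀ *ᵥ (ut - un), μ • (zt - zn) - (ut - un),
        A *ᵥ (βt - βn) - (zt - zn) + (2 / μ) • (ut - un)) - Fop A c (βn, zn, un) =
      (η • ((fun j => βt j + (Aᵀ *ᵥ ut) j / η) - βn),
        μ • ((fun j => zt j - ut j / μ) - zn), 0) := by
  subst hun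
  refine Prod.ext ?_ (Prod.ext ?_ ?_) <;> ext j <;>
    simp only [Fop, Prod.mk_sub_mk, mulVec_sub, mulVec_smul, mulVec_mulVec, sub_sub_cancel,
      neg_sub, sub_sub_sub_cancel_right, Pi.sub_apply, Pi.add_apply, Pi.smul_apply, smul_eq_mul,
      Pi.zero_apply] <;>
    field_simp <;> ring

theorem ppaStep_variationalInequality (hμ : 0 < μ) (hη : 0 < η) {βt zt ut βn zn un : Vec p}
    (hβn : βn = fun j => soft (1 / η) (βt j + (Aᵀ *ᵥ ut) j / η))
    (hzn : zn = fun j => clip r (zt j - ut j / μ))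
    (hun : un = ut - (μ / 2) • ((2 : ℝ) • (A *ᵥ βn - zn - c) - (A *ᵥ βt - zt - c)))
    (β z u : Vec p) (hz : inZ r z) :
    ipH (ppaH A μ η) ((β, z, u) - (βn, zn, un)) ((βt, zt, ut) - (βn, zn, un)) ≤
      l1 β - l1 βn + ip ((β, z, u) - (βn, zn, un)) (Fop A c (βn, zn, un)) := by
  have hsoft := sub_soft_dotProduct_add_l1_le (one_div_nonneg.2 hη.le)
    (fun j => βt j + (Aᵀ *ᵥ ut) j / η) β
  have hclip := sub_clip_dotProduct_sub_clip_nonpos hz (fun j => zt j - ut j / μ)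
  rw [← hβn] at hsoft
  rw [← hzn] at hclip
  have hβ : η * ((β - βn) ⬝ᵥ ((fun j => βt j + (Aᵀ *ᵥ ut) j / η) - βn)) + l1 βn ≤ l1 β := by
    have := mul_le_mul_of_nonneg_left hsoft hη.le
    rwa [mul_add, ← mul_assoc, ← mul_assoc, mul_one_div_cancel hη.ne', one_mul, one_mul,
      dotProduct_comm] at this
  have hzμ : μ * ((z - zn) ⬝ᵥ ((fun j => zt j - ut j / μ) - zn)) ≤ 0 :=
    mul_nonpos_of_nonneg_of_nonpos hμ.le (by rwa [dotProduct_comm])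
  simp only [Prod.mk_sub_mk]
  rw [ipH_ppaH, ← sub_add_cancel (ip _ _) (ip _ (Fop A c (βn, zn, un))), ← ip_sub_right,
    ppaH_sub_Fop A c μ η hμ.ne' hη.ne' hun, ip_mk]
  simp only [dotProduct_smul, smul_eq_mul, dotProduct_zero, add_zero]
  linarith

end Step

theorem stmt16_general {p : ℕ} (A : Matrix (Fin p) (Fin p) ℝ) (c : Vec p)
    (μ η r : ℝ) (hμ : 0 < μ) (hη : 0 < η) (hr : 0 ≤ r)
    (βt zt ut βn zn un : Vec p)
    (hβn : βn = fun j => soft (1 / η) (βt j + (Aᵀ *ᵥ ut) j / η))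
    (hzn : zn = fun j => clip r (zt j - ut j / μ))
    (hun : un = ut - (μ / 2) •
      ((2 : ℝ) • (A *ᵥ βn - zn - c) - (A *ᵥ βt - zt - c))) :
    inZ r zn ∧
      ∀ gg : Trip p, inZ r gg.2.1 →
        ipH (Matrix.fromBlocks (η • (1 : Matrix (Fin p) (Fin p) ℝ))
            (Matrix.fromCols (0 : Matrix (Fin p) (Fin p) ℝ) Aᵀ)
            (Matrix.fromRows (0 : Matrix (Fin p) (Fin p) ℝ) A)
            (Matrix.fromBlocks (μ • (1 : Matrix (Fin p) (Fin p) ℝ))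
              (-(1 : Matrix (Fin p) (Fin p) ℝ)) (-(1 : Matrix (Fin p) (Fin p) ℝ))
              ((2 / μ) • (1 : Matrix (Fin p) (Fin p) ℝ))))
          (gg - (βn, zn, un)) ((βt, zt, ut) - (βn, zn, un)) ≤
        l1 gg.1 - l1 βn + ip (gg - (βn, zn, un)) (Fop A c (βn, zn, un)) := by
  refine ⟨fun j => hzn ▸ abs_clip_le hr _, ?_⟩
  rintro ⟨β, z, u⟩ hz
  exact ppaStep_variationalInequality A c μ η r hμ hη hβn hzn hun β z u hz

/-- One step of the (non-parallel, linearized) PPA for the Dantzig selector satisfies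
the PPA variational inequality with matrix
`H = [[ηI, 0, Aᵀ], [0, μI, −I], [A, −I, (2/μ)I]]`, and keeps `z^{t+1} ∈ Z_r`. -/
theorem stmt16 {p : ℕ} (A : Matrix (Fin p) (Fin p) ℝ) (c : Vec p)
    (μ η r : ℝ) (hμ : 0 < μ) (hη : 0 < η) (hr : 0 ≤ r)
    (hS : (η • (1 : Matrix (Fin p) (Fin p) ℝ) - μ • (Aᵀ * A)).PosDef)
    (βt zt ut βn zn un : Vec p) (hzt : inZ r zt)
    (hβn : βn = fun j => soft (1 / η) (βt j + (Aᵀ *ᵥ ut) j / η))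
    (hzn : zn = fun j => clip r (zt j - ut j / μ))
    (hun : un = ut - (μ / 2) •
      ((2 : ℝ) • (A *ᵥ βn - zn - c) - (A *ᵥ βt - zt - c))) :
    inZ r zn ∧
      ∀ gg : Trip p, inZ r gg.2.1 →
        ipH (Matrix.fromBlocks (η • (1 : Matrix (Fin p) (Fin p) ℝ))
            (Matrix.fromCols (0 : Matrix (Fin p) (Fin p) ℝ) Aᵀ)
            (Matrix.fromRows (0 : Matrix (Fin p) (Fin p) ℝ) A)
            (Matrix.fromBlocks (μ • (1 : Matrix (Fin p) (Fin p) ℝ))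
              (-(1 : Matrix (Fin p) (Fin p) ℝ)) (-(1 : Matrix (Fin p) (Fin p) ℝ))
              ((2 / μ) • (1 : Matrix (Fin p) (Fin p) ℝ))))
          (gg - (βn, zn, un)) ((βt, zt, ut) - (βn, zn, un)) ≤
        l1 gg.1 - l1 βn + ip (gg - (βn, zn, un)) (Fop A c (βn, zn, un)) :=
  stmt16_general A c μ η r hμ hη hr βt zt ut βn zn un hβn hzn hun
end
end

section
/- (Weighted Dantzig selector rate) Fix A ∈ ℝ^{p×p}, c ∈ ℝ^p, weights w ∈ ℝ^p with w_j ≥ 0 and radii ρ ∈ ℝ^p with ρ_j ≥ 0; set θ_w(β) = Σ_j w_j|β_j| and Z_ρ = {z ∈ ℝ^p : |z_j| ≤ ρ_j for all j}, and F(β, z, u) = (−Aᵀu, u, Aβ − z − c). Suppose the sequence g^t = (β^t, z^t, u^t), with z^t ∈ Z_ρ for all t, satisfies: for every t and every g = (β, z, u) with z ∈ Z_ρ, θ_w(β) − θ_w(β^{t+1}) + ⟨g − g^{t+1}, F(g^{t+1})⟩ ≥ ⟨g − g^{t+1}, H(g^t − g^{t+1})⟩ for a symmetric positive definite matrix H;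 and suppose g* with z* ∈ Z_ρ satisfies θ_w(β) − θ_w(β*) + ⟨g − g*, F(g*)⟩ ≥ 0 for all g with z ∈ Z_ρ. Then for every integer T ≥ 0, ‖g^T − g^{T+1}‖_H² ≤ (1/(T+1)) · ‖g^0 − g*‖_H². -/
/-!
The iteration is a proximal point method for the monotone variational inequality of the
saddle point problem, in the metric of `H`. Adding the inequality of step `t` to that of the
saddle point `g*` shows `⟨g^{t+1} - g*, H(g^t - g^{t+1})⟩ ≥ 0`, so `‖g^t - g*‖_H²` decreases by
at least `‖g^t - g^{t+1}‖_H²` per step; adding the inequalities of two consecutive steps shows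
that `‖g^t - g^{t+1}‖_H²` is nonincreasing. Hence `(T + 1) ‖g^T - g^{T+1}‖_H²` is at most the
telescoping sum `Σ_{t ≤ T} ‖g^t - g^{t+1}‖_H² ≤ ‖g^0 - g*‖_H²`. The monotonicity of `F` comes
from its linear part `(β, z, u) ↦ (-Aᵀu, u, Aβ - z)` being skew-symmetric.
-/

open Matrix

noncomputable section

/-- The weighted ℓ₁ functional `θ_w(β) = Σ_j w_j |β_j|`. -/
def thetaW {p : ℕ} (w : Vec p) (β : Vec p) : ℝ := ∑ j, w j * |β j|

/-- Membership in the box `Z_ρ = {z : |z_j| ≤ ρ_j for all j}`. -/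
def inZρ {p : ℕ} (ρ : Vec p) (z : Vec p) : Prop := ∀ j, |z j| ≤ ρ j

lemma mul_le_of_antitone_of_le_sub {D a : ℕ → ℝ} (hD : Antitone D)
    (hDa : ∀ t, D t ≤ a t - a (t + 1)) (ha : ∀ t, 0 ≤ a t) (T : ℕ) :
    (T + 1 : ℝ) * D T ≤ a 0 :=
  calc (T + 1 : ℝ) * D T = ∑ _t ∈ Finset.range (T + 1), D T := by simp
    _ ≤ ∑ t ∈ Finset.range (T + 1), D t :=
      Finset.sum_le_sum fun t ht => hD (Finset.mem_range_succ_iff.mp ht)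
    _ ≤ ∑ t ∈ Finset.range (T + 1), (a t - a (t + 1)) := Finset.sum_le_sum fun t _ => hDa t
    _ = a 0 - a (T + 1) := Finset.sum_range_sub' a (T + 1)
    _ ≤ a 0 := sub_le_self _ (ha _)

namespace LinearMap.BilinForm

variable {E : Type*} [AddCommGroup E] [Module ℝ E] {B : LinearMap.BilinForm ℝ E}

lemma IsSymm.apply_self_eq (hB : B.IsSymm) (x y : E) :
    B x x = B y y + 2 * B y (x - y) + B (x - y) (x - y) := by
  conv_lhs => rw [← add_sub_cancel y x]
  rw [map_add, map_add, LinearMap.add_apply, LinearMap.add_apply, hB.eq (x - y) y]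
  ring

lemma add_nonpos_of_variational_ineq (θ : E → ℝ) {F : E → E}
    (hF : ∀ x y, 0 ≤ B (x - y) (F x - F y)) {x y : E} {r s : ℝ}
    (hx : r ≤ θ y - θ x + B (y - x) (F x)) (hy : s ≤ θ x - θ y + B (x - y) (F y)) :
    r + s ≤ 0 := by
  have hpair : B (y - x) (F x) + B (x - y) (F y) = -B (x - y) (F x - F y) := by
    rw [← neg_sub x y, map_neg, LinearMap.neg_apply, map_sub (B (x - y))]
    ring
  linarith [hF x y]

section ProximalPoint

variable {g : ℕ → E} {gs : E}

lemma antitone_apply_self_sub_succ (hB : B.IsSymm) (hpos : ∀ x, 0 ≤ B x x)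
    (hstep : ∀ t, B (g (t + 2) - g (t + 1)) (g t - g (t + 1)) +
      B (g (t + 1) - g (t + 2)) (g (t + 1) - g (t + 2)) ≤ 0) :
    Antitone fun t => B (g t - g (t + 1)) (g t - g (t + 1)) := by
  refine antitone_nat_of_succ_le fun t => ?_
  show B (g (t + 1) - g (t + 2)) _ ≤ _
  have hsplit := hB.apply_self_eq (g t - g (t + 1)) (g (t + 1) - g (t + 2))
  have hcross : B (g (t + 2) - g (t + 1)) (g t - g (t + 1)) =
      -B (g (t + 1) - g (t + 2)) (g t - g (t + 1)) := by
    rw [← neg_sub, map_neg, LinearMap.neg_apply]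
  rw [map_sub (B _) (g t - g (t + 1))] at hsplit
  linarith [hstep t, hpos (g t - g (t + 1) - (g (t + 1) - g (t + 2)))]

lemma apply_self_sub_succ_le (hB : B.IsSymm)
    (hfix : ∀ t, B (gs - g (t + 1)) (g t - g (t + 1)) ≤ 0) (t : ℕ) :
    B (g t - g (t + 1)) (g t - g (t + 1)) ≤
      B (g t - gs) (g t - gs) - B (g (t + 1) - gs) (g (t + 1) - gs) := by
  have hsplit := hB.apply_self_eq (g t - gs) (g (t + 1) - gs)
  have hcross : B (gs - g (t + 1)) (g t - g (t + 1)) =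
      -B (g (t + 1) - gs) (g t - g (t + 1)) := by
    rw [← neg_sub, map_neg, LinearMap.neg_apply]
  rw [sub_sub_sub_cancel_right] at hsplit
  linarith [hfix t]

theorem apply_self_sub_succ_le_one_div_mul (hB : B.IsSymm) (hpos : ∀ x, 0 ≤ B x x)
    (hfix : ∀ t, B (gs - g (t + 1)) (g t - g (t + 1)) ≤ 0)
    (hstep : ∀ t, B (g (t + 2) - g (t + 1)) (g t - g (t + 1)) +
      B (g (t + 1) - g (t + 2)) (g (t + 1) - g (t + 2)) ≤ 0) (T : ℕ) :
    B (g T - g (T + 1)) (g T - g (T + 1)) ≤ 1 / (T + 1 : ℝ) * B (g 0 - gs) (g 0 - gs) := by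
  rw [one_div_mul_eq_div, le_div_iff₀' (by positivity)]
  exact mul_le_of_antitone_of_le_sub (antitone_apply_self_sub_succ hB hpos hstep)
    (apply_self_sub_succ_le hB hfix) (fun t => hpos _) T

end ProximalPoint

end LinearMap.BilinForm

section DantzigSelector

variable {p : ℕ}

def toSumₗ (p : ℕ) : Trip p →ₗ[ℝ] Idx3 p → ℝ where
  toFun := toSum
  map_add' _ _ := by ext (i | i | i) <;> rfl
  map_smul' _ _ := by ext (i | i | i) <;> rfl

def ipHForm (H : Matrix (Idx3 p) (Idx3 p) ℝ) : LinearMap.BilinForm ℝ (Trip p) :=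
  (Matrix.toBilin' H).comp (toSumₗ p) (toSumₗ p)

lemma ipHForm_apply (H : Matrix (Idx3 p) (Idx3 p) ℝ) (v w : Trip p) :
    ipHForm H v w = ipH H v w := by
  rw [ipHForm, LinearMap.BilinForm.comp_apply, Matrix.toBilin'_apply']
  rfl

lemma ip_eq_ipHForm_one (v w : Trip p) : ip v w = ipHForm 1 v w := by
  rw [ipHForm_apply, ipH, one_mulVec]
  rfl

lemma ipHForm_isSymm {H : Matrix (Idx3 p) (Idx3 p) ℝ} (hH : H.IsSymm) : (ipHForm H).IsSymm :=
  ⟨fun v w => by rw [ipHForm, LinearMap.BilinForm.comp_apply, LinearMap.BilinForm.comp_apply,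
    (Matrix.isSymm_toBilin'_iff_isSymm.mpr hH).eq]⟩

lemma ipHForm_self_nonneg {H : Matrix (Idx3 p) (Idx3 p) ℝ} (hH : H.PosSemidef) (v : Trip p) :
    0 ≤ ipHForm H v v := by
  simpa [ipHForm_apply, ipH] using hH.dotProduct_mulVec_nonneg (toSum v)

lemma ip_eq_add_dotProduct (v w : Trip p) :
    ip v w = v.1 ⬝ᵥ w.1 + v.2.1 ⬝ᵥ w.2.1 + v.2.2 ⬝ᵥ w.2.2 := by
  simp only [ip, toSum, sumElim_dotProduct_sumElim, add_assoc]

lemma Fop_sub_Fop (A : Matrix (Fin p) (Fin p) ℝ) (c : Vec p) (x y : Trip p) :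
    Fop A c x - Fop A c y =
      (-(Aᵀ *ᵥ (x - y).2.2), (x - y).2.2, A *ᵥ (x - y).1 - (x - y).2.1) := by
  simp only [Fop, Prod.mk_sub_mk, Prod.fst_sub, Prod.snd_sub, mulVec_sub]
  congr 2 <;> abel

lemma ip_sub_Fop_sub_Fop (A : Matrix (Fin p) (Fin p) ℝ) (c : Vec p) (x y : Trip p) :
    ip (x - y) (Fop A c x - Fop A c y) = 0 := by
  rw [Fop_sub_Fop, ip_eq_add_dotProduct]
  generalize x - y = v
  rw [dotProduct_neg, dotProduct_mulVec, vecMul_transpose, dotProduct_sub,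
    dotProduct_comm v.2.2 (A *ᵥ v.1), dotProduct_comm v.2.2 v.2.1]
  ring

end DantzigSelector

theorem stmt18_general {p : ℕ} (A : Matrix (Fin p) (Fin p) ℝ) (c : Vec p)
    (w ρ : Vec p)
    (H : Matrix (Idx3 p) (Idx3 p) ℝ) (hH : H.PosDef)
    (g : ℕ → Trip p) (hz : ∀ t, inZρ ρ (g t).2.1)
    (hPVI : ∀ t : ℕ, ∀ gg : Trip p, inZρ ρ gg.2.1 →
      ipH H (gg - g (t + 1)) (g t - g (t + 1)) ≤
        thetaW w gg.1 - thetaW w (g (t + 1)).1 +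
          ip (gg - g (t + 1)) (Fop A c (g (t + 1))))
    (gs : Trip p) (hzs : inZρ ρ gs.2.1)
    (hgs : ∀ gg : Trip p, inZρ ρ gg.2.1 →
      0 ≤ thetaW w gg.1 - thetaW w gs.1 + ip (gg - gs) (Fop A c gs)) :
    ∀ T : ℕ, ipH H (g T - g (T + 1)) (g T - g (T + 1)) ≤
      (1 / (T + 1 : ℝ)) * ipH H (g 0 - gs) (g 0 - gs) := by
  simp only [← ipHForm_apply, ip_eq_ipHForm_one] at hPVI hgs ⊢
  have hF : ∀ x y, 0 ≤ ipHForm 1 (x - y) (Fop A c x - Fop A c y) := fun x y =>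
    (ip_eq_ipHForm_one _ _ ▸ ip_sub_Fop_sub_Fop A c x y).ge
  refine LinearMap.BilinForm.apply_self_sub_succ_le_one_div_mul
    (ipHForm_isSymm (Matrix.isHermitian_iff_isSymm.mp hH.isHermitian))
    (ipHForm_self_nonneg hH.posSemidef) (fun t => ?_) (fun t => ?_)
  · simpa only [add_zero] using LinearMap.BilinForm.add_nonpos_of_variational_ineq (fun x => thetaW w x.1) hF
      (hPVI t gs hzs) (hgs _ (hz (t + 1)))
  · exact LinearMap.BilinForm.add_nonpos_of_variational_ineq (fun x => thetaW w x.1) hF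
      (hPVI t _ (hz (t + 2))) (hPVI (t + 1) _ (hz (t + 1)))

/-- Weighted Dantzig selector O(1/T) rate: if the sequence `g^t` (with `z^t ∈ Z_ρ`)
satisfies the weighted PPA variational inequality with symmetric positive definite `H`
and `g*` is a weighted saddle point, then for every `T ≥ 0`,
`‖g^T − g^{T+1}‖_H² ≤ (1/(T+1)) ‖g^0 − g*‖_H²`. -/
theorem stmt18 {p : ℕ} (A : Matrix (Fin p) (Fin p) ℝ) (c : Vec p)
    (w ρ : Vec p) (hw : ∀ j, 0 ≤ w j) (hρ : ∀ j, 0 ≤ ρ j)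
    (H : Matrix (Idx3 p) (Idx3 p) ℝ) (hH : H.PosDef)
    (g : ℕ → Trip p) (hz : ∀ t, inZρ ρ (g t).2.1)
    (hPVI : ∀ t : ℕ, ∀ gg : Trip p, inZρ ρ gg.2.1 →
      ipH H (gg - g (t + 1)) (g t - g (t + 1)) ≤
        thetaW w gg.1 - thetaW w (g (t + 1)).1 +
          ip (gg - g (t + 1)) (Fop A c (g (t + 1))))
    (gs : Trip p) (hzs : inZρ ρ gs.2.1)
    (hgs : ∀ gg : Trip p, inZρ ρ gg.2.1 →
      0 ≤ thetaW w gg.1 - thetaW w gs.1 + ip (gg - gs) (Fop A c gs)) :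
    ∀ T : ℕ, ipH H (g T - g (T + 1)) (g T - g (T + 1)) ≤
      (1 / (T + 1 : ℝ)) * ipH H (g 0 - gs) (g 0 - gs) :=
  stmt18_general A c w ρ H hH g hz hPVI gs hzs hgs
end
end
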